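/- arXiv:2011.09643 — 2 statements merged into one kernel-verified Lean document; each statement's English description precedes it below -/
import Mathlib

section
/- With g as above and c = 1/2, one step of gradient descent from f₀ with learning rate 1 yields f₀ - ∇g(f₀) = (I - L)·f₀. In particular, if L = I - P for some matrix P, then the result equals P·f₀. -/
open Matrix

open scoped RealInnerProductSpace in
theorem LinearMap.IsSymmetric.hasGradientAt_norm_sub_sq_add_inner_self
    {F : Type*} [NormedAddCommGroup F] [InnerProductSpace ℝ F] [CompleteSpace F] {T : F →L[ℝ] F}
    (hT : (T : F →ₗ[ℝ] F).IsSymmetric) (a : F) (c : ℝ) (x : F) :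
    HasGradientAt (fun y => ‖y - a‖ ^ 2 + c * ⟪y, T y⟫) ((2 : ℝ) • (x - a) + (2 * c) • T x) x := by
  have hquad : (fun y => ⟪y, T y⟫) = T.reApplyInnerSelf := by
    ext y
    simp [ContinuousLinearMap.reApplyInnerSelf_apply, real_inner_comm]
  have hderiv := ((hasStrictFDerivAt_norm_sq (x - a)).hasFDerivAt.comp x
    ((hasFDerivAt_id x).sub_const a)).add
      ((hT.hasStrictFDerivAt_reApplyInnerSelf x).hasFDerivAt.const_mul c)
  rw [← hquad] at hderiv
  refine hasGradientAt_iff_hasFDerivAt.mpr (hderiv.congr_fderiv ?_)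
  ext v
  simp only [InnerProductSpace.toDual_apply_apply, inner_add_left, real_inner_smul_left,
    _root_.add_apply, ContinuousLinearMap.comp_id, _root_.smul_apply,
    innerSL_apply_apply, smul_eq_mul]
  ring

theorem Matrix.IsSymm.isSymmetric_toEuclideanCLM {n : Type*} [Fintype n] [DecidableEq n]
    {A : Matrix n n ℝ} (hA : A.IsSymm) :
    (toEuclideanCLM (𝕜 := ℝ) A : EuclideanSpace ℝ n →ₗ[ℝ] EuclideanSpace ℝ n).IsSymmetric :=
  isSymmetric_toEuclideanLin_iff.mpr (isHermitian_iff_isSymm.mpr hA)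

/-- With `g(f) = ‖f - f₀‖² + c·fᵀLf`, `c = 1/2`, one gradient-descent step
from `f₀` with learning rate 1 gives `f₀ - ∇g(f₀) = (I - L)f₀`; and if `L = I - P`,
the result is `P·f₀` (the GCN convolution). -/
theorem one_step_gradient_descent {n : ℕ} (L P : Matrix (Fin n) (Fin n) ℝ)
    (hL : L.IsSymm) (hP : L = 1 - P) (f₀ : EuclideanSpace ℝ (Fin n)) :
    f₀ - gradient (fun f : EuclideanSpace ℝ (Fin n) =>
        ‖f - f₀‖ ^ 2 + (1 / 2 : ℝ) * ((f : Fin n → ℝ) ⬝ᵥ L.mulVec (f : Fin n → ℝ))) f₀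
      = (EuclideanSpace.equiv (Fin n) ℝ).symm (((1 : Matrix (Fin n) (Fin n) ℝ) - L).mulVec (f₀ : Fin n → ℝ))
    ∧ f₀ - gradient (fun f : EuclideanSpace ℝ (Fin n) =>
        ‖f - f₀‖ ^ 2 + (1 / 2 : ℝ) * ((f : Fin n → ℝ) ⬝ᵥ L.mulVec (f : Fin n → ℝ))) f₀
      = (EuclideanSpace.equiv (Fin n) ℝ).symm (P.mulVec (f₀ : Fin n → ℝ)) := by
  have hgrad := (hL.isSymmetric_toEuclideanCLM.hasGradientAt_norm_sub_sq_add_inner_self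
    f₀ (1 / 2) f₀).gradient
  simp only [inner_toEuclideanCLM, sub_self, smul_zero, zero_add] at hgrad
  have hstep : f₀ - gradient (fun f : EuclideanSpace ℝ (Fin n) =>
        ‖f - f₀‖ ^ 2 + (1 / 2 : ℝ) * ((f : Fin n → ℝ) ⬝ᵥ L.mulVec (f : Fin n → ℝ))) f₀
      = (EuclideanSpace.equiv (Fin n) ℝ).symm ((1 - L).mulVec (f₀ : Fin n → ℝ)) := by
    rw [hgrad]
    ext i
    simp [sub_mulVec]
  refine ⟨hstep, ?_⟩
  rw [hstep, hP, sub_sub_cancel]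
end

section
/- Repeated application of the GCN smoothing operator converges: if P = D̃^{-1/2}ÃD̃^{-1/2} where Ã corresponds to a connected graph with self-loops, then P^k f₀ converges as k → ∞ to the projection of f₀ onto the span of u, where u_i = √(1+d_i). (Over-smoothing: the limit representation is the same up to the factor √(1+d_i) for all nodes.) -/
open Matrix Filter Topology

/-!
Put `B = A + 1`, so that `P = D̃^{-1/2} B D̃^{-1/2}` with `D̃` the row sums of `B`, and write
`v = D̃^{1/2} x`. By symmetry of `B`,
`∑ᵢⱼ Bᵢⱼ (xᵢ - c xⱼ)² = (1 + c²) ⟪v, v⟫ - 2c ⟪v, P v⟫` for every `c`.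
With `c = 1` the left side is `≥ 0`, so every eigenvalue of `P` is `≤ 1`, and `P v = v` forces
`x` to be constant along edges, hence constant on the connected graph: `v ∈ span u`.
With `c = -1` the self-loop terms make the left side `> 0`, so every eigenvalue is `> -1`.
Diagonalising the symmetric `P`, its powers converge. The limit `L` of `P^k f₀` is fixed by `P`,
so `L = t u`, and `uᵀ P = uᵀ` gives `⟪u, L⟫ = ⟪u, f₀⟫`, which determines `t`.
-/

section Powers

variable {ι : Type*} [Fintype ι] [DecidableEq ι]

theorem exists_tendsto_pow_of_mem_Ioc {μ : ℝ} (hμ : μ ∈ Set.Ioc (-1) 1) :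
    ∃ l, Tendsto (fun k : ℕ => μ ^ k) atTop (𝓝 l) := by
  rcases hμ.2.eq_or_lt with rfl | hlt
  · exact ⟨1, by simp⟩
  · exact ⟨0, tendsto_pow_atTop_nhds_zero_of_abs_lt_one (abs_lt.2 ⟨hμ.1, hlt⟩)⟩

theorem Matrix.IsHermitian.exists_tendsto_pow {P : Matrix ι ι ℝ} (hP : P.IsHermitian)
    (hspec : spectrum ℝ P ⊆ Set.Ioc (-1) 1) :
    ∃ M, Tendsto (fun k : ℕ => P ^ k) atTop (𝓝 M) := by
  choose l hl using fun i =>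
    exists_tendsto_pow_of_mem_Ioc (hspec (hP.eigenvalues_mem_spectrum_real i))
  have hpow (k : ℕ) : P ^ k = Unitary.conjStarAlgAut ℝ _ hP.eigenvectorUnitary
      (diagonal fun i => hP.eigenvalues i ^ k) := by
    conv_lhs => rw [hP.spectral_theorem]
    rw [← map_pow, diagonal_pow]
    rfl
  refine ⟨Unitary.conjStarAlgAut ℝ _ hP.eigenvectorUnitary (diagonal l), ?_⟩
  simp only [hpow, Unitary.conjStarAlgAut_apply]
  have hdiag := (continuous_id.matrix_diagonal.tendsto _).comp (tendsto_pi_nhds.2 hl)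
  exact (hdiag.const_mul _).mul_const _

theorem vecMul_pow_eq_self {P : Matrix ι ι ℝ} {u : ι → ℝ} (h : u ᵥ* P = u) (k : ℕ) :
    u ᵥ* (P ^ k) = u := by
  induction k with
  | zero => simp
  | succ k ih => rw [pow_succ, ← vecMul_vecMul, ih, h]

theorem eq_smul_of_tendsto_pow_mulVec {P : Matrix ι ι ℝ} {u f L : ι → ℝ}
    (huP : u ᵥ* P = u) (hfix : ∀ v, P *ᵥ v = v → ∃ t : ℝ, v = t • u)
    (hL : Tendsto (fun k : ℕ => (P ^ k) *ᵥ f) atTop (𝓝 L)) :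
    L = ((u ⬝ᵥ f) / (u ⬝ᵥ u)) • u := by
  have hPL : P *ᵥ L = L := by
    refine tendsto_nhds_unique ?_ ((tendsto_add_atTop_iff_nat 1).2 hL)
    simpa only [Function.comp_def, id, pow_succ', ← mulVec_mulVec] using
      ((continuous_const.matrix_mulVec continuous_id).tendsto L).comp hL
  have huL : u ⬝ᵥ L = u ⬝ᵥ f := by
    have h := (((continuous_const (y := u)).dotProduct continuous_id).tendsto L).comp hL
    simp only [Function.comp_def, id, dotProduct_mulVec, vecMul_pow_eq_self huP] at h
    exact tendsto_nhds_unique h tendsto_const_nhds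
  obtain ⟨t, rfl⟩ := hfix L hPL
  rw [dotProduct_smul, smul_eq_mul] at huL
  rcases eq_or_ne (u ⬝ᵥ u) 0 with hu | hu
  · simp [dotProduct_self_eq_zero.1 hu]
  · rw [← huL, mul_div_cancel_right₀ _ hu]

end Powers

section SymmNormalize

variable {ι : Type*} [Fintype ι] {B : Matrix ι ι ℝ}

noncomputable def sqrtRowSum (B : Matrix ι ι ℝ) (i : ι) : ℝ := √(∑ j, B i j)

theorem sum_row_pos_of_diag_pos (hnn : ∀ i j, 0 ≤ B i j) (hdiag : ∀ i, 0 < B i i) (i : ι) :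
    0 < ∑ j, B i j :=
  (hdiag i).trans_le (Finset.single_le_sum (fun j _ => hnn i j) (Finset.mem_univ i))

theorem sqrtRowSum_pos (hr : ∀ i, 0 < ∑ j, B i j) (i : ι) : 0 < sqrtRowSum B i :=
  Real.sqrt_pos.2 (hr i)

theorem sqrtRowSum_mul_self (hr : ∀ i, 0 < ∑ j, B i j) (i : ι) :
    sqrtRowSum B i * sqrtRowSum B i = ∑ j, B i j :=
  Real.mul_self_sqrt (hr i).le

variable [DecidableEq ι]

noncomputable def symmNormalize (B : Matrix ι ι ℝ) : Matrix ι ι ℝ :=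
  diagonal (fun i => 1 / sqrtRowSum B i) * B * diagonal (fun i => 1 / sqrtRowSum B i)

theorem symmNormalize_apply (i j : ι) :
    symmNormalize B i j = B i j / (sqrtRowSum B i * sqrtRowSum B j) := by
  rw [symmNormalize, mul_diagonal, diagonal_mul]
  field_simp

theorem Matrix.IsSymm.symmNormalize (hB : B.IsSymm) : (symmNormalize B).IsSymm :=
  IsSymm.ext fun i j => by rw [symmNormalize_apply, symmNormalize_apply, hB.apply, mul_comm]

theorem symmNormalize_mulVec_sqrtRowSum (hr : ∀ i, 0 < ∑ j, B i j) :
    symmNormalize B *ᵥ sqrtRowSum B = sqrtRowSum B := by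
  funext i
  have hs := sqrtRowSum_pos hr
  calc (symmNormalize B *ᵥ sqrtRowSum B) i = (∑ j, B i j) / sqrtRowSum B i := by
        simp only [mulVec, dotProduct, symmNormalize_apply, Finset.sum_div]
        refine Finset.sum_congr rfl fun j _ => ?_
        field_simp [(hs i).ne', (hs j).ne']
    _ = sqrtRowSum B i := by rw [← sqrtRowSum_mul_self hr, mul_self_div_self]

theorem sum_mul_sub_smul_sq (hB : B.IsSymm) (hr : ∀ i, 0 < ∑ j, B i j) (v : ι → ℝ) (c : ℝ) :
    ∑ i, ∑ j, B i j * (v i / sqrtRowSum B i - c * (v j / sqrtRowSum B j)) ^ 2 =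
      (1 + c ^ 2) * (v ⬝ᵥ v) - 2 * c * (v ⬝ᵥ symmNormalize B *ᵥ v) := by
  have hs := sqrtRowSum_pos hr
  obtain ⟨x, hx⟩ : ∃ x : ι → ℝ, ∀ i, v i = sqrtRowSum B i * x i :=
    ⟨fun i => v i / sqrtRowSum B i, fun i => (mul_div_cancel₀ _ (hs i).ne').symm⟩
  have hvv : v ⬝ᵥ v = ∑ i, ∑ j, B i j * x i ^ 2 := by
    refine Finset.sum_congr rfl fun i _ => ?_
    rw [← Finset.sum_mul, ← sqrtRowSum_mul_self hr, hx]
    ring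
  have hvv' : v ⬝ᵥ v = ∑ i, ∑ j, B i j * x j ^ 2 := by
    rw [hvv, Finset.sum_comm]
    simp only [hB.apply]
  have hvNv : v ⬝ᵥ symmNormalize B *ᵥ v = ∑ i, ∑ j, B i j * (x i * x j) := by
    simp only [dotProduct, mulVec, Finset.mul_sum, symmNormalize_apply, hx]
    refine Finset.sum_congr rfl fun i _ => Finset.sum_congr rfl fun j _ => ?_
    field_simp [(hs i).ne', (hs j).ne']
  have hexpand (i j : ι) : B i j * (x i - c * x j) ^ 2 =
      B i j * x i ^ 2 + c ^ 2 * (B i j * x j ^ 2) - 2 * c * (B i j * (x i * x j)) := by ring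
  simp only [hx, mul_div_cancel_left₀ _ (hs _).ne', hexpand, Finset.sum_add_distrib,
    Finset.sum_sub_distrib, ← Finset.mul_sum]
  rw [hvNv, ← hvv, ← hvv']
  ring

theorem le_one_of_symmNormalize_mulVec_eq_smul (hB : B.IsSymm) (hnn : ∀ i j, 0 ≤ B i j)
    (hr : ∀ i, 0 < ∑ j, B i j) {μ : ℝ} {v : ι → ℝ} (hv : v ≠ 0)
    (hμ : symmNormalize B *ᵥ v = μ • v) : μ ≤ 1 := by
  have hsum := sum_mul_sub_smul_sq hB hr v 1
  rw [hμ, dotProduct_smul, smul_eq_mul] at hsum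
  have hsum_nonneg :
      0 ≤ ∑ i, ∑ j, B i j * (v i / sqrtRowSum B i - 1 * (v j / sqrtRowSum B j)) ^ 2 :=
    Finset.sum_nonneg fun i _ => Finset.sum_nonneg fun j _ => mul_nonneg (hnn i j) (sq_nonneg _)
  have hvv : 0 < v ⬝ᵥ v := by simpa using dotProduct_self_star_pos_iff.2 hv
  nlinarith

theorem neg_one_lt_of_symmNormalize_mulVec_eq_smul (hB : B.IsSymm) (hnn : ∀ i j, 0 ≤ B i j)
    (hdiag : ∀ i, 0 < B i i) {μ : ℝ} {v : ι → ℝ} (hv : v ≠ 0)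
    (hμ : symmNormalize B *ᵥ v = μ • v) : -1 < μ := by
  have hr := sum_row_pos_of_diag_pos hnn hdiag
  have hsum := sum_mul_sub_smul_sq hB hr v (-1)
  rw [hμ, dotProduct_smul, smul_eq_mul] at hsum
  obtain ⟨i, hi⟩ := Function.ne_iff.1 hv
  have hxi : v i / sqrtRowSum B i ≠ 0 := div_ne_zero hi (sqrtRowSum_pos hr i).ne'
  have hterm_nonneg (i j : ι) :
      0 ≤ B i j * (v i / sqrtRowSum B i - -1 * (v j / sqrtRowSum B j)) ^ 2 :=
    mul_nonneg (hnn i j) (sq_nonneg _)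
  have hsum_pos :
      0 < ∑ i, ∑ j, B i j * (v i / sqrtRowSum B i - -1 * (v j / sqrtRowSum B j)) ^ 2 := by
    refine Finset.sum_pos' (fun i _ => Finset.sum_nonneg fun j _ => hterm_nonneg i j)
      ⟨i, Finset.mem_univ i, Finset.sum_pos' (fun j _ => hterm_nonneg i j)
        ⟨i, Finset.mem_univ i, ?_⟩⟩
    exact mul_pos (hdiag i) (sq_pos_of_ne_zero fun h => hxi (by linarith))
  have hvv : 0 ≤ v ⬝ᵥ v := by simpa using dotProduct_self_star_nonneg v
  nlinarith

theorem exists_eq_smul_sqrtRowSum_of_symmNormalize_mulVec_eq_self (hB : B.IsSymm)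
    (hnn : ∀ i j, 0 ≤ B i j) (hr : ∀ i, 0 < ∑ j, B i j)
    (hconn : ∀ i j, Relation.ReflTransGen (fun a b => B a b ≠ 0) i j) {v : ι → ℝ}
    (hv : symmNormalize B *ᵥ v = v) : ∃ t : ℝ, v = t • sqrtRowSum B := by
  have hsum := sum_mul_sub_smul_sq hB hr v 1
  rw [hv] at hsum
  simp only [one_mul] at hsum
  have hterm_nonneg (i j : ι) : 0 ≤ B i j * (v i / sqrtRowSum B i - v j / sqrtRowSum B j) ^ 2 :=
    mul_nonneg (hnn i j) (sq_nonneg _)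
  have hterm_zero (i j : ι) : B i j * (v i / sqrtRowSum B i - v j / sqrtRowSum B j) ^ 2 = 0 := by
    have hzero : ∑ i, ∑ j, B i j * (v i / sqrtRowSum B i - v j / sqrtRowSum B j) ^ 2 = 0 := by
      rw [hsum]; ring
    rw [Finset.sum_eq_zero_iff_of_nonneg fun i _ =>
      Finset.sum_nonneg fun j _ => hterm_nonneg i j] at hzero
    exact (Finset.sum_eq_zero_iff_of_nonneg fun j _ => hterm_nonneg i j).1
      (hzero i (Finset.mem_univ i)) j (Finset.mem_univ j)
  have hadj {a b : ι} (hab : B a b ≠ 0) : v a / sqrtRowSum B a = v b / sqrtRowSum B b := by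
    simpa [hab, sub_eq_zero] using hterm_zero a b
  have hconst (i j : ι) : v i / sqrtRowSum B i = v j / sqrtRowSum B j := by
    induction hconn i j with
    | refl => rfl
    | tail _ hbc ih => exact ih.trans (hadj hbc)
  rcases isEmpty_or_nonempty ι with hι | ⟨⟨i₀⟩⟩
  · exact ⟨0, Subsingleton.elim _ _⟩
  · refine ⟨v i₀ / sqrtRowSum B i₀, funext fun i => ?_⟩
    rw [Pi.smul_apply, smul_eq_mul, ← hconst i i₀, div_mul_cancel₀ _ (sqrtRowSum_pos hr i).ne']

theorem spectrum_symmNormalize_subset_Ioc (hB : B.IsSymm) (hnn : ∀ i j, 0 ≤ B i j)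
    (hdiag : ∀ i, 0 < B i i) : spectrum ℝ (symmNormalize B) ⊆ Set.Ioc (-1) 1 := by
  intro μ hμ
  rw [← Matrix.spectrum_toLin', ← Module.End.hasEigenvalue_iff_mem_spectrum] at hμ
  obtain ⟨v, hv⟩ := hμ.exists_hasEigenvector
  have hNv : symmNormalize B *ᵥ v = μ • v := by simpa using hv.apply_eq_smul
  exact ⟨neg_one_lt_of_symmNormalize_mulVec_eq_smul hB hnn hdiag hv.2 hNv,
    le_one_of_symmNormalize_mulVec_eq_smul hB hnn (sum_row_pos_of_diag_pos hnn hdiag) hv.2 hNv⟩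

end SymmNormalize

section SelfLoops

variable {ι : Type*} [DecidableEq ι] {A : Matrix ι ι ℝ}

theorem le_add_one_apply (i j : ι) : A i j ≤ (A + 1) i j := by
  rw [Matrix.add_apply, one_apply]
  split_ifs <;> linarith

theorem add_one_apply_self_pos (hA : ∀ i j, 0 ≤ A i j) (i : ι) : 0 < (A + 1) i i := by
  rw [Matrix.add_apply, one_apply_eq]
  linarith [hA i i]

theorem sum_add_one_apply [Fintype ι] (i : ι) : ∑ j, (A + 1) i j = 1 + ∑ j, A i j := by
  simp [Matrix.add_apply, Finset.sum_add_distrib, one_apply, add_comm]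

end SelfLoops

/-- over-smoothing: For the GCN operator `P = D̃^{-1/2} Ã D̃^{-1/2}` of a
connected graph with self-loops, `P^k f₀` converges as `k → ∞` to the projection of
`f₀` onto the span of `u`, where `u_i = √(1+d_i)`. -/
theorem oversmoothing_convergence {n : ℕ} (A : Matrix (Fin n) (Fin n) ℝ)
    (hA : A.IsSymm) (h01 : ∀ i j, A i j = 0 ∨ A i j = 1)
    (hconn : ∀ i j : Fin n, Relation.ReflTransGen (fun a b => A a b = 1) i j)
    (d : Fin n → ℝ) (hd : ∀ i, d i = ∑ j, A i j)
    (P : Matrix (Fin n) (Fin n) ℝ)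
    (hP : P = Matrix.diagonal (fun i => 1 / Real.sqrt (1 + d i)) * (A + 1)
              * Matrix.diagonal (fun i => 1 / Real.sqrt (1 + d i)))
    (u : Fin n → ℝ) (hu : ∀ i, u i = Real.sqrt (1 + d i)) (f₀ : Fin n → ℝ) :
    Tendsto (fun k : ℕ => (P ^ k).mulVec f₀) atTop
      (nhds (((u ⬝ᵥ f₀) / (u ⬝ᵥ u)) • u)) := by
  have hA0 (i j : Fin n) : 0 ≤ A i j := by rcases h01 i j with h | h <;> simp [h]
  have hnn (i j : Fin n) : 0 ≤ (A + 1) i j := (hA0 i j).trans (le_add_one_apply i j)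
  have hdiag := add_one_apply_self_pos hA0
  have hr := sum_row_pos_of_diag_pos hnn hdiag
  have hrow (i : Fin n) : 1 + d i = ∑ j, (A + 1) i j := by rw [sum_add_one_apply, hd]
  have hconn' (i j : Fin n) : Relation.ReflTransGen (fun a b => (A + 1) a b ≠ 0) i j :=
    Relation.ReflTransGen.mono (fun a b hab => (one_pos.trans_le (hab ▸ le_add_one_apply a b)).ne')
      i j (hconn i j)
  have hPN : P = symmNormalize (A + 1) := by simp only [hP, hrow, symmNormalize, sqrtRowSum]
  have huN : u = sqrtRowSum (A + 1) := funext fun i => by rw [hu, hrow, sqrtRowSum]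
  subst hPN huN
  have hB := hA.add isSymm_one
  have huP : sqrtRowSum (A + 1) ᵥ* symmNormalize (A + 1) = sqrtRowSum (A + 1) := by
    rw [← mulVec_transpose, hB.symmNormalize.eq, symmNormalize_mulVec_sqrtRowSum hr]
  obtain ⟨M, hM⟩ := (isHermitian_iff_isSymm.2 hB.symmNormalize).exists_tendsto_pow
    (spectrum_symmNormalize_subset_Ioc hB hnn hdiag)
  have hlim : Tendsto (fun k => symmNormalize (A + 1) ^ k *ᵥ f₀) atTop (𝓝 (M *ᵥ f₀)) :=
    ((continuous_id.matrix_mulVec continuous_const).tendsto M).comp hM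
  have hfix (v : Fin n → ℝ) := exists_eq_smul_sqrtRowSum_of_symmNormalize_mulVec_eq_self
    (v := v) hB hnn hr hconn'
  rwa [eq_smul_of_tendsto_pow_mulVec huP hfix hlim] at hlim
end
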